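/- Let p ≥ 1, k ≥ 1, μ > 0, R > 0, let (Ω, P) be a probability space, and for each ω ∈ Ω let F_ω : ℝ^p → ℝ be differentiable, with all maps of ω appearing below measurable. Let W ⊆ ℝ^p satisfy ‖u‖ ≤ R for all u ∈ W, and let w̄ ∈ W be k-sparse. Assume: (i) E[‖∇F_ω(w̄)‖_∞²] ≤ δ_n for some δ_n ∈ (0,1); (ii) there is a measurable event A ⊆ Ω with P(A) ≥ 1 − δ'_n such that for every ω ∈ A the function F_ω is μ-restricted strongly convex at sparsity level 2k; (iii) δ'_n ≤ min{1/2, δ_n/(4R²)}. If w : Ω → W is measurable with ‖w(ω)‖₀ ≤ k and F_ω(w(ω)) ≤ F_ω(w̄) for every ω, then E[‖w − w̄‖²] ≤ (16k/μ² + 1)δ_n. Moreover, if ε ≥ 0 and w̃ : Ω → W is measurable with ‖w̃(ω)‖₀ ≤ k and F_ω(w̃(ω)) ≤ F_ω(w̄) + ε for every ω, then E[‖w̃ − w̄‖²] ≤ (32k/μ² + 1)δ_n + 4ε/μ. -/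

import Mathlib

open MeasureTheory Set
open scoped ENNReal NNReal

noncomputable section

abbrev Vec (p : ℕ) := EuclideanSpace ℝ (Fin p)

def spt {p : ℕ} (w : Vec p) : Set (Fin p) := {i | w i ≠ 0}

/-- coordinate-wise maximum norm -/
def linf {p : ℕ} (w : Vec p) : ℝ := ⨆ i, |w i|

/-- μ-restricted strong convexity at sparsity level s -/
def RSC {p : ℕ} (μ : ℝ) (s : ℕ) (f : Vec p → ℝ) : Prop :=
  ∀ w w' : Vec p, (spt (w - w')).ncard ≤ s →
    μ / 2 * ‖w - w'‖ ^ 2 ≤ f w - f w' - (inner ℝ (gradient f w') (w - w') : ℝ)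

lemma linf_nonneg {p : ℕ} (w : Vec p) : 0 ≤ linf w := by
  unfold linf
  rcases isEmpty_or_nonempty (Fin p) with h | h
  · simp [Real.iSup_of_isEmpty]
  · exact le_ciSup_of_le (Set.Finite.bddAbove (Set.finite_range _))
      (Classical.arbitrary _) (abs_nonneg _)

lemma abs_le_linf {p : ℕ} (w : Vec p) (i : Fin p) : |w i| ≤ linf w :=
  le_ciSup (f := fun j => |w j|) (Set.Finite.bddAbove (Set.finite_range _)) i

lemma spt_sub_card {p : ℕ} (u v : Vec p) :
    (spt (u - v)).ncard ≤ (spt u).ncard + (spt v).ncard := by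
  have hsub : spt (u - v) ⊆ spt u ∪ spt v := by
    intro i hi
    by_contra h
    simp only [mem_union, not_or] at h
    have h1 : u i = 0 := by simpa [spt] using fun hh => h.1 hh
    have h2 : v i = 0 := by simpa [spt] using fun hh => h.2 hh
    have : (u - v) i ≠ 0 := hi
    simp [h1, h2] at this
  exact le_trans (Set.ncard_le_ncard hsub (Set.toFinite _)) (Set.ncard_union_le _ _)

lemma inner_bound {p : ℕ} (g d : Vec p) :
    |(inner ℝ g d : ℝ)| ≤ linf g * (Real.sqrt ((spt d).ncard) * ‖d‖) := by
  classical
  set T : Finset (Fin p) := Finset.univ.filter (fun i => d i ≠ 0) with hT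
  have hcard : (spt d).ncard = T.card := by
    rw [show spt d = ↑T by ext i; simp [spt, hT], Set.ncard_coe_finset]
  have hinner : (inner ℝ g d : ℝ) = ∑ i ∈ T, g i * d i := by
    rw [PiLp.inner_apply]
    simp only [RCLike.inner_apply, starRingEnd_apply, star_trivial]
    conv_lhs => arg 2; ext i; rw [mul_comm]
    refine (Finset.sum_subset (Finset.subset_univ T) ?_).symm
    intro i _ hi
    simp only [hT, Finset.mem_filter, Finset.mem_univ, true_and, not_not] at hi
    simp [hi]
  have h1 : |(inner ℝ g d : ℝ)| ≤ ∑ i ∈ T, |d i| * linf g := by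
    rw [hinner]
    refine le_trans (Finset.abs_sum_le_sum_abs _ _) (Finset.sum_le_sum fun i _ => ?_)
    rw [abs_mul, mul_comm]
    exact mul_le_mul_of_nonneg_left (abs_le_linf g i) (abs_nonneg _)
  have h2 : ∑ i ∈ T, |d i| ≤ Real.sqrt (T.card) * ‖d‖ := by
    have := Real.sum_mul_le_sqrt_mul_sqrt T (fun _ => (1:ℝ)) (fun i => |d i|)
    simp only [one_mul, one_pow, Finset.sum_const, nsmul_eq_mul, mul_one, sq_abs] at this
    refine le_trans this ?_
    refine mul_le_mul_of_nonneg_left ?_ (Real.sqrt_nonneg _)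
    rw [EuclideanSpace.norm_eq]
    simp only [Real.norm_eq_abs, sq_abs]
    exact Real.sqrt_le_sqrt (Finset.sum_le_univ_sum_of_nonneg fun i => sq_abs (d i) ▸ sq_nonneg (d i))
  calc |(inner ℝ g d : ℝ)| ≤ ∑ i ∈ T, |d i| * linf g := h1
    _ = linf g * ∑ i ∈ T, |d i| := by rw [Finset.mul_sum]; congr 1; ext i; ring
    _ ≤ linf g * (Real.sqrt ((spt d).ncard) * ‖d‖) := by
        rw [hcard]; exact mul_le_mul_of_nonneg_left h2 (linf_nonneg g)

lemma key {p k : ℕ} {μ ε : ℝ} (hμ : 0 < μ) (hε : 0 ≤ ε) (f : Vec p → ℝ)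
    (hf : RSC μ (2 * k) f) {w wbar : Vec p} (hw : (spt w).ncard ≤ k)
    (hwb : (spt wbar).ncard ≤ k) (hle : f w ≤ f wbar + ε) :
    μ ^ 2 * ‖w - wbar‖ ^ 2 ≤ 4 * ε * μ + 8 * k * (linf (gradient f wbar)) ^ 2 := by
  have hcard : (spt (w - wbar)).ncard ≤ 2 * k :=
    le_trans (spt_sub_card w wbar) (by omega)
  have h1 := hf w wbar hcard
  have h2 := inner_bound (gradient f wbar) (w - wbar)
  set G := linf (gradient f wbar) with hGdef
  set t := ‖w - wbar‖ with htdef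
  have hG : 0 ≤ G := linf_nonneg _
  have ht : 0 ≤ t := norm_nonneg _
  set S := Real.sqrt (2 * k) with hSdef
  have hS : 0 ≤ S := Real.sqrt_nonneg _
  have hS2 : S ^ 2 = 2 * k := Real.sq_sqrt (by positivity)
  have hsq : Real.sqrt ((spt (w - wbar)).ncard) ≤ S := by
    rw [hSdef]
    exact Real.sqrt_le_sqrt (by exact_mod_cast hcard)
  have h3 : -(inner ℝ (gradient f wbar) (w - wbar) : ℝ) ≤ G * (S * t) := by
    have hn := neg_abs_le (inner ℝ (gradient f wbar) (w - wbar) : ℝ)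
    have : Real.sqrt ((spt (w - wbar)).ncard) * t ≤ S * t :=
      mul_le_mul_of_nonneg_right hsq ht
    nlinarith [h2]
  have h4 : μ / 2 * t ^ 2 ≤ ε + G * (S * t) := by linarith
  nlinarith [sq_nonneg (μ * t - 2 * G * S), mul_le_mul_of_nonneg_left h4 (le_of_lt hμ)]

/-- Lemma B.1: in-expectation ℓ₂-estimation error bounds for exact and
approximate k-sparse empirical minimizers, under high-probability restricted strong
convexity of the random objective. -/
theorem stmt3 {p k : ℕ} (hp : 1 ≤ p) (hk : 1 ≤ k) {μ R : ℝ} (hμ : 0 < μ) (hR : 0 < R)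
    {Ω : Type*} [MeasurableSpace Ω] (P : Measure Ω) [IsProbabilityMeasure P]
    (F : Ω → Vec p → ℝ) (hdiff : ∀ ω, Differentiable ℝ (F ω))
    (W : Set (Vec p)) (hWR : ∀ u ∈ W, ‖u‖ ≤ R)
    (wbar : Vec p) (hwbarW : wbar ∈ W) (hwbar : (spt wbar).ncard ≤ k)
    {δn : ℝ} (hδn : δn ∈ Set.Ioo (0 : ℝ) 1)
    (hgradint : Integrable (fun ω => (linf (gradient (F ω) wbar)) ^ 2) P)
    (hgrad : ∫ ω, (linf (gradient (F ω) wbar)) ^ 2 ∂P ≤ δn)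
    {δn' : ℝ} (A : Set Ω) (hA : MeasurableSet A)
    (hPA : ENNReal.ofReal (1 - δn') ≤ P A)
    (hRSC : ∀ ω ∈ A, RSC μ (2 * k) (F ω))
    (hδn' : δn' ≤ min (1 / 2) (δn / (4 * R ^ 2))) :
    (∀ w : Ω → Vec p, Measurable w → (∀ ω, w ω ∈ W) → (∀ ω, (spt (w ω)).ncard ≤ k) →
      (∀ ω, F ω (w ω) ≤ F ω wbar) →
      ∫ ω, ‖w ω - wbar‖ ^ 2 ∂P ≤ (16 * k / μ ^ 2 + 1) * δn)
    ∧ (∀ ε : ℝ, 0 ≤ ε → ∀ wt : Ω → Vec p, Measurable wt → (∀ ω, wt ω ∈ W) →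
        (∀ ω, (spt (wt ω)).ncard ≤ k) → (∀ ω, F ω (wt ω) ≤ F ω wbar + ε) →
        ∫ ω, ‖wt ω - wbar‖ ^ 2 ∂P ≤ (32 * k / μ ^ 2 + 1) * δn + 4 * ε / μ) := by
  obtain ⟨hδn0, hδn1⟩ := hδn
  have hδ'half : δn' ≤ 1 / 2 := le_trans hδn' (min_le_left _ _)
  have hδ'R : δn' ≤ δn / (4 * R ^ 2) := le_trans hδn' (min_le_right _ _)
  have hδ'0 : 0 ≤ δn' := by
    by_contra h
    push_neg at h
    have h1 : (1 : ℝ≥0∞) < ENNReal.ofReal (1 - δn') := by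
      rw [← ENNReal.ofReal_one]
      exact (ENNReal.ofReal_lt_ofReal_iff (by linarith)).2 (by linarith)
    exact absurd (le_trans hPA (prob_le_one)) (not_le.2 h1)
  have hPAc : (P Aᶜ).toReal ≤ δn' := by
    have hPA1 : P A ≤ 1 := prob_le_one
    have h1 : P Aᶜ = 1 - P A := prob_compl_eq_one_sub hA
    have h2 : (1 - δn' : ℝ) ≤ (P A).toReal := by
      have := ENNReal.toReal_mono (measure_ne_top P A) hPA
      rwa [ENNReal.toReal_ofReal (by linarith)] at this
    rw [h1, ENNReal.toReal_sub_of_le hPA1 ENNReal.one_ne_top, ENNReal.toReal_one]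
    linarith
  have hμ2 : (0:ℝ) < μ ^ 2 := by positivity
  set G : Ω → ℝ := fun ω => linf (gradient (F ω) wbar) with hGdef
  have hGint : Integrable (fun ω => G ω ^ 2) P := hgradint
  -- the generic bound
  have main : ∀ ε : ℝ, 0 ≤ ε → ∀ w : Ω → Vec p, Measurable w → (∀ ω, w ω ∈ W) →
      (∀ ω, (spt (w ω)).ncard ≤ k) → (∀ ω, F ω (w ω) ≤ F ω wbar + ε) →
      ∫ ω, ‖w ω - wbar‖ ^ 2 ∂P ≤ 4 * ε / μ + 8 * k / μ ^ 2 * δn + δn := by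
    intro ε hε w hwm hwW hwsp hwle
    set f2 : Ω → ℝ := fun ω => ‖w ω - wbar‖ ^ 2 with hf2def
    have hmeas : Measurable f2 := ((hwm.sub measurable_const).norm.pow_const 2)
    have hbound : ∀ ω, ‖f2 ω‖ ≤ (2 * R) ^ 2 := by
      intro ω
      have h1 : ‖w ω - wbar‖ ≤ 2 * R := by
        have := norm_sub_le (w ω) wbar
        have h2 := hWR _ (hwW ω)
        have h3 := hWR _ hwbarW
        linarith
      rw [Real.norm_eq_abs, abs_of_nonneg (by positivity)]
      exact pow_le_pow_left₀ (norm_nonneg _) h1 2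
    have hint : Integrable f2 P :=
      (integrable_const ((2 * R) ^ 2)).mono' hmeas.aestronglyMeasurable (ae_of_all _ hbound)
    set g : Ω → ℝ := fun ω => 4 * ε / μ + 8 * k / μ ^ 2 * G ω ^ 2 with hgdef
    have hgint : Integrable g P := (integrable_const _).add (hGint.const_mul _)
    have hsplit : ∫ ω, f2 ω ∂P = (∫ ω in A, f2 ω ∂P) + ∫ ω in Aᶜ, f2 ω ∂P :=
      (integral_add_compl hA hint).symm
    have hptA : ∀ ω ∈ A, f2 ω ≤ g ω := by
      intro ω hω
      have hkey := key hμ hε (F ω) (hRSC ω hω) (hwsp ω) hwbar (hwle ω)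
      have h1 : ‖w ω - wbar‖ ^ 2 ≤ (4 * ε * μ + 8 * k * G ω ^ 2) / μ ^ 2 := by
        rw [le_div_iff₀ hμ2]
        nlinarith [hkey]
      have h2 : (4 * ε * μ + 8 * k * G ω ^ 2) / μ ^ 2 = g ω := by
        simp only [hgdef]
        field_simp
      simp only [hf2def]
      rw [← h2]; exact h1
    have hIA : ∫ ω in A, f2 ω ∂P ≤ ∫ ω in A, g ω ∂P :=
      setIntegral_mono_on hint.integrableOn hgint.integrableOn hA hptA
    have hIA2 : ∫ ω in A, g ω ∂P ≤ ∫ ω, g ω ∂P :=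
      setIntegral_le_integral hgint (ae_of_all _ fun ω => by positivity)
    have hIA3 : ∫ ω, g ω ∂P ≤ 4 * ε / μ + 8 * k / μ ^ 2 * δn := by
      rw [hgdef]
      rw [integral_add (integrable_const _) (hGint.const_mul _), integral_const,
        MeasureTheory.integral_const_mul]
      simp only [measure_univ, probReal_univ, ENNReal.toReal_one, smul_eq_mul, one_mul]
      have : (8 * (k:ℝ) / μ ^ 2) * ∫ ω, G ω ^ 2 ∂P ≤ 8 * k / μ ^ 2 * δn :=
        mul_le_mul_of_nonneg_left hgrad (by positivity)
      linarith
    have hptC : ∀ ω ∈ Aᶜ, f2 ω ≤ (2 * R) ^ 2 := by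
      intro ω _
      have := hbound ω
      rw [Real.norm_eq_abs] at this
      exact le_trans (le_abs_self _) this
    have hIC : ∫ ω in Aᶜ, f2 ω ∂P ≤ δn := by
      have h1 : ∫ ω in Aᶜ, f2 ω ∂P ≤ ∫ _ω in Aᶜ, (2 * R) ^ 2 ∂P :=
        setIntegral_mono_on hint.integrableOn (integrable_const _).integrableOn hA.compl hptC
      have h2 : ∫ _ω in Aᶜ, ((2 * R) ^ 2 : ℝ) ∂P = (P Aᶜ).toReal * (2 * R) ^ 2 := by
        rw [setIntegral_const]; rfl
      have h3 : (P Aᶜ).toReal * (2 * R) ^ 2 ≤ δn' * (4 * R ^ 2) := by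
        have : ((2:ℝ) * R) ^ 2 = 4 * R ^ 2 := by ring
        rw [this]
        exact mul_le_mul_of_nonneg_right hPAc (by positivity)
      have h4 : δn' * (4 * R ^ 2) ≤ δn := by
        have h5 : (0:ℝ) < 4 * R ^ 2 := by positivity
        calc δn' * (4 * R ^ 2) ≤ (δn / (4 * R ^ 2)) * (4 * R ^ 2) :=
              mul_le_mul_of_nonneg_right hδ'R (le_of_lt h5)
          _ = δn := by field_simp
      linarith
    calc ∫ ω, f2 ω ∂P = (∫ ω in A, f2 ω ∂P) + ∫ ω in Aᶜ, f2 ω ∂P := hsplit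
      _ ≤ (4 * ε / μ + 8 * k / μ ^ 2 * δn) + δn := add_le_add (le_trans hIA (le_trans hIA2 hIA3)) hIC
  constructor
  · intro w hwm hwW hwsp hwle
    have h := main 0 le_rfl w hwm hwW hwsp (fun ω => by linarith [hwle ω])
    have e1 : (4:ℝ) * 0 / μ = 0 := by ring
    have e2 : (16 * (k:ℝ) / μ ^ 2 + 1) * δn = 16 * k / μ ^ 2 * δn + δn := by ring
    have e3 : 16 * (k:ℝ) / μ ^ 2 * δn - 8 * k / μ ^ 2 * δn = 8 * k * δn / μ ^ 2 := by ring
    have h4 : (0:ℝ) ≤ 8 * k * δn / μ ^ 2 := by positivity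
    linarith
  · intro ε hε wt hwm hwW hwsp hwle
    have h := main ε hε wt hwm hwW hwsp hwle
    have e2 : (32 * (k:ℝ) / μ ^ 2 + 1) * δn + 4 * ε / μ
        = 32 * k / μ ^ 2 * δn + δn + 4 * ε / μ := by ring
    have e3 : 32 * (k:ℝ) / μ ^ 2 * δn - 8 * k / μ ^ 2 * δn = 24 * k * δn / μ ^ 2 := by ring
    have h4 : (0:ℝ) ≤ 24 * k * δn / μ ^ 2 := by positivity
    linarith
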